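/- Greedy maximization guarantee under submodularity: if f : 2^S → ℝ is a monotone nondecreasing submodular function with f(∅) = 0 on a finite ground set S, then the greedy algorithm that iteratively adds the element with largest marginal gain for M steps returns a set S^R of size M with f(S^R) ≥ (1 − 1/e) · max_{|A| ≤ M} f(A). -/

import Mathlib

open Finset

/-- `f` is submodular on subsets of a finite ground set. -/
def Submodular {S : Type*} [DecidableEq S] (f : Finset S → ℝ) : Prop :=
  ∀ (A B : Finset S) (x : S), A ⊆ B → x ∉ B →
    f (insert x B) - f B ≤ f (insert x A) - f A

/-- `f` is monotone nondecreasing on subsets. -/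
def MonotoneSet {S : Type*} (f : Finset S → ℝ) : Prop :=
  ∀ A B : Finset S, A ⊆ B → f A ≤ f B

/-
Submodularity bounds the gain of adding a whole set `A` to the current greedy set `G` by the sum
of the single-element gains, each of which is at most the greedy gain `δ`; with `|A| ≤ M` this
gives `δ ≥ (f A - f G) / M`. Hence the gap `f A - f G` shrinks by a factor `1 - 1/M` per step,
and after `M` steps it is at most `(1 - 1/M)^M f A ≤ f A / e`.
-/

theorem le_pow_mul_of_forall_succ_le_mul {α : Type*} [Semiring α] [PartialOrder α] [PosMulMono α]
    {u : ℕ → α} {q : α} (hq : 0 ≤ q) {n : ℕ}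
    (h : ∀ i < n, u (i + 1) ≤ q * u i) : u n ≤ q ^ n * u 0 := by
  induction n with
  | zero => simp
  | succ n ih =>
    calc u (n + 1) ≤ q * u n := h n n.lt_succ_self
      _ ≤ q * (q ^ n * u 0) :=
        mul_le_mul_of_nonneg_left (ih fun i hi => h i (hi.trans n.lt_succ_self)) hq
      _ = q ^ (n + 1) * u 0 := by rw [pow_succ', mul_assoc]

theorem card_eq_of_insert_chain {S : Type*} [DecidableEq S] {g : ℕ → Finset S} {M : ℕ}
    (hg0 : g 0 = ∅) (hstep : ∀ i < M, ∃ x ∉ g i, g (i + 1) = insert x (g i)) :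
    ∀ i ≤ M, (g i).card = i := by
  intro i hi
  induction i with
  | zero => simp [hg0]
  | succ n ih =>
    obtain ⟨x, hx, hsucc⟩ := hstep n hi
    rw [hsucc, card_insert_of_notMem hx, ih (Nat.le_of_succ_le hi)]

section

variable {S : Type*} [DecidableEq S] {f : Finset S → ℝ}

theorem MonotoneSet.marginal_nonneg (hmono : MonotoneSet f) (x : S) (G : Finset S) :
    0 ≤ f (insert x G) - f G :=
  sub_nonneg.mpr (hmono _ _ (subset_insert x G))

namespace Submodular

theorem sub_le_sum_marginal (hsub : Submodular f) (T B : Finset S) :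
    f (T ∪ B) - f B ≤ ∑ x ∈ T, (f (insert x B) - f B) := by
  induction T using Finset.induction_on with
  | empty => simp
  | @insert a T ha ih =>
    rw [sum_insert ha, insert_union]
    have hgain : f (insert a (T ∪ B)) - f (T ∪ B) ≤ f (insert a B) - f B := by
      by_cases haB : a ∈ B
      · simp [insert_eq_of_mem haB, insert_eq_of_mem (mem_union_right T haB)]
      · exact hsub B (T ∪ B) a subset_union_right (by simp [ha, haB])
    linarith

theorem sub_le_card_mul_greedy_gain (hsub : Submodular f) (hmono : MonotoneSet f)
    (A : Finset S) {G : Finset S} {x : S}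
    (hx : ∀ y ∉ G, f (insert y G) ≤ f (insert x G)) :
    f A - f G ≤ A.card * (f (insert x G) - f G) := by
  have hgain_nonneg := hmono.marginal_nonneg x G
  have hgain_le : ∀ y ∈ A, f (insert y G) - f G ≤ f (insert x G) - f G := by
    intro y _
    by_cases hy : y ∈ G
    · simpa [insert_eq_of_mem hy] using hgain_nonneg
    · linarith [hx y hy]
  calc f A - f G ≤ f (A ∪ G) - f G := by linarith [hmono A (A ∪ G) subset_union_left]
    _ ≤ ∑ y ∈ A, (f (insert y G) - f G) := hsub.sub_le_sum_marginal A G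
    _ ≤ ∑ _y ∈ A, (f (insert x G) - f G) := sum_le_sum hgain_le
    _ = A.card * (f (insert x G) - f G) := by rw [sum_const, nsmul_eq_mul]

theorem gap_greedy_insert_le (hsub : Submodular f) (hmono : MonotoneSet f)
    {A G : Finset S} {x : S} {M : ℕ} (hM : 0 < M) (hA : A.card ≤ M)
    (hx : ∀ y ∉ G, f (insert y G) ≤ f (insert x G)) :
    f A - f (insert x G) ≤ (1 - 1 / M) * (f A - f G) := by
  have hM' : (0 : ℝ) < M := by exact_mod_cast hM
  have hgain_nonneg := hmono.marginal_nonneg x G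
  have hbound : f A - f G ≤ M * (f (insert x G) - f G) :=
    (hsub.sub_le_card_mul_greedy_gain hmono A hx).trans
      (mul_le_mul_of_nonneg_right (by exact_mod_cast hA) hgain_nonneg)
  have hdiv : (f A - f G) / M ≤ f (insert x G) - f G := by
    rwa [div_le_iff₀ hM', mul_comm]
  rw [sub_mul, one_mul, one_div_mul_eq_div]
  linarith

end Submodular

end

theorem greedy_submodular_guarantee_general {S : Type*} [DecidableEq S]
    (f : Finset S → ℝ) (hsub : Submodular f) (hmono : MonotoneSet f)
    (hempty : f ∅ = 0) (M : ℕ)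
    (g : ℕ → Finset S) (hg0 : g 0 = ∅)
    (hgreedy : ∀ i < M, ∃ x ∉ g i,
      g (i + 1) = insert x (g i) ∧
      ∀ y ∉ g i, f (insert y (g i)) ≤ f (insert x (g i))) :
    (g M).card = M ∧
    ∀ A : Finset S, A.card ≤ M → (1 - 1 / Real.exp 1) * f A ≤ f (g M) := by
  have hcard := card_eq_of_insert_chain hg0 fun i hi =>
    (hgreedy i hi).imp fun _ ⟨hx, hsucc, _⟩ => ⟨hx, hsucc⟩
  refine ⟨hcard M le_rfl, fun A hA => ?_⟩
  rcases M.eq_zero_or_pos with rfl | hM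
  · simp [card_eq_zero.mp (Nat.le_zero.mp hA), hempty, hg0]
  have hq : (0 : ℝ) ≤ 1 - 1 / M := by
    rw [sub_nonneg, div_le_one (by exact_mod_cast hM)]
    exact_mod_cast hM
  have hgap : f A - f (g M) ≤ (1 - 1 / M) ^ M * (f A - f (g 0)) :=
    le_pow_mul_of_forall_succ_le_mul (u := fun i => f A - f (g i)) hq fun i hi => by
      obtain ⟨x, -, hsucc, hx⟩ := hgreedy i hi
      simpa only [hsucc] using hsub.gap_greedy_insert_le hmono hM hA hx
  have hexp : (1 - 1 / (M : ℝ)) ^ M ≤ 1 / Real.exp 1 := by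
    simpa [Real.exp_neg] using Real.one_sub_div_pow_le_exp_neg (t := 1) (n := M)
      (by exact_mod_cast hM)
  have hfA : 0 ≤ f A := hempty ▸ hmono ∅ A (empty_subset A)
  rw [hg0, hempty, sub_zero] at hgap
  nlinarith [mul_le_mul_of_nonneg_right hexp hfA]

/-- Greedy `(1 − 1/e)`-approximation guarantee for maximizing a monotone
submodular function `f` with `f ∅ = 0` under a cardinality constraint `M`:
the greedy chain `g` (adding a maximal-marginal-gain fresh element at each
step) yields `f (g M) ≥ (1 − 1/e) · max_{|A| ≤ M} f A`. -/
theorem greedy_submodular_guarantee {S : Type*} [Fintype S] [DecidableEq S]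
    (f : Finset S → ℝ) (hsub : Submodular f) (hmono : MonotoneSet f)
    (hempty : f ∅ = 0) (M : ℕ) (hM : M ≤ Fintype.card S)
    (g : ℕ → Finset S) (hg0 : g 0 = ∅)
    (hgreedy : ∀ i < M, ∃ x ∉ g i,
      g (i + 1) = insert x (g i) ∧
      ∀ y ∉ g i, f (insert y (g i)) ≤ f (insert x (g i))) :
    (g M).card = M ∧
    ∀ A : Finset S, A.card ≤ M → (1 - 1 / Real.exp 1) * f A ≤ f (g M) :=
  greedy_submodular_guarantee_general f hsub hmono hempty M g hg0 hgreedy
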